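/- Let p be a modular point of multiplicity m in a non-pencil real supersolvable line arrangement L. Then every line of L not passing through p contains a crossing point of multiplicity 2. -/

import Mathlib

open Projectivization

/-- The projective plane over `K`, with points (and, dually, lines) given by
projectivizing `K^3`. -/
abbrev PP (K : Type*) [Field K] := Projectivization K (Fin 3 → K)

/-- Incidence: the point `p` lies on the line `l` (given by dual coordinates):
the dot product of (any) homogeneous coordinates vanishes. -/
def incid {K : Type*} [Field K] (p l : PP K) : Prop :=
  dotProduct p.rep l.rep = 0

/-- The multiplicity of a point `p` with respect to a line arrangement `L`:
the number of lines of `L` passing through `p`. -/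
noncomputable def mult {K : Type*} [Field K] (L : Set (PP K)) (p : PP K) : ℕ :=
  {l ∈ L | incid p l}.ncard

/-- `p` is a crossing point of the arrangement `L`. -/
def crossing {K : Type*} [Field K] (L : Set (PP K)) (p : PP K) : Prop :=
  2 ≤ mult L p

/-- `p` is a modular point of `L`: a crossing point such that for every other
crossing point `q`, some line of `L` passes through both `p` and `q`. -/
def modular {K : Type*} [Field K] (L : Set (PP K)) (p : PP K) : Prop :=
  crossing L p ∧ ∀ q, crossing L q → q ≠ p → ∃ l ∈ L, incid p l ∧ incid q l

/-- `t_k`: the number of crossing points of `L` of multiplicity exactly `k`. -/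
noncomputable def tk {K : Type*} [Field K] (L : Set (PP K)) (k : ℕ) : ℕ :=
  {p | mult L p = k}.ncard

/-- A pencil: all lines pass through one common point. -/
def isPencil {K : Type*} [Field K] (L : Set (PP K)) : Prop :=
  ∃ p, ∀ l ∈ L, incid p l

/-- A near pencil: an arrangement of `s ≥ 3` lines, exactly `s - 1` of which
are concurrent. -/
def isNearPencil {K : Type*} [Field K] (L : Set (PP K)) : Prop :=
  3 ≤ L.ncard ∧ ∃ p, {l ∈ L | incid p l}.ncard + 1 = L.ncard

/-!
Take `l` as horizontal axis and a line `π` through `p` that avoids every other crossing point as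
line at infinity, so that the lines through `p` become the vertical lines. If no crossing point
`q` of `l` were double, `q` would lie on a further line `E q` of the arrangement, not through `p`,
of some slope `u q`. Two such lines `E q`, `E q'` meet in a crossing point off `l`; by modularity
it lies on a vertical line through a crossing point `t` of `l`, and comparing its height on both
lines gives `u q * u q' * (t - q) * (t - q') > 0`. A minimal counterexample shows that then all
slopes `u q` have the same sign, which is absurd for the two outermost crossing points of `l`.
-/

open Matrix
open scoped LinearAlgebra.Projectivization

namespace Projectivization

variable {F : Type*} [Field F]

lemma eq_cross_of_orthogonal [DecidableEq F] {x v w : ℙ F (Fin 3 → F)} (h : v ≠ w)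
    (hv : x.orthogonal v) (hw : x.orthogonal w) : x = cross v w := by
  induction x with | h x hx =>
  induction v with | h v hv' =>
  induction w with | h w hw' =>
  rw [orthogonal_mk] at hv hw
  rw [cross_mk_of_ne hv' hw' h, mk_eq_mk_iff_crossProduct_eq_zero,
    cross_cross_eq_smul_sub_smul', hw, dotProduct_comm, hv, zero_smul, zero_smul, sub_zero]

end Projectivization

section Incidence

variable {K : Type*} [Field K]

lemma incid_iff_orthogonal {x g : PP K} : incid x g ↔ x.orthogonal g := by
  conv_rhs => rw [← x.mk_rep, ← g.mk_rep]
  rfl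

lemma incid_comm {x g : PP K} : incid x g ↔ incid g x := by
  rw [incid, incid, dotProduct_comm]

lemma incid_mk {x : PP K} {v : Fin 3 → K} (hv : v ≠ 0) : incid x (mk K v hv) ↔ x.rep ⬝ᵥ v = 0 := by
  conv_lhs => rw [← x.mk_rep]
  rw [incid_iff_orthogonal]
  rfl

lemma point_eq_of_incid {x y g g' : PP K} (hg : g ≠ g') (hx : incid x g) (hx' : incid x g')
    (hy : incid y g) (hy' : incid y g') : x = y := by
  classical
  rw [incid_iff_orthogonal] at hx hx' hy hy'
  rw [eq_cross_of_orthogonal hg hx hx', eq_cross_of_orthogonal hg hy hy']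

lemma line_eq_of_incid {x y g g' : PP K} (hxy : x ≠ y) (hx : incid x g) (hy : incid y g)
    (hx' : incid x g') (hy' : incid y g') : g = g' := by
  rw [incid_comm] at hx hy hx' hy'
  exact point_eq_of_incid hxy hx hy hx' hy'

lemma exists_incid_incid {g g' : PP K} (h : g ≠ g') : ∃ x, incid x g ∧ incid x g' := by
  classical
  exact ⟨cross g g', incid_iff_orthogonal.2 (cross_orthogonal_left h),
    incid_iff_orthogonal.2 (cross_orthogonal_right h)⟩

end Incidence

section Arrangement

variable {K : Type*} [Field K] {L : Set (PP K)}

lemma crossing_of_incid (hfin : L.Finite) {x g g' : PP K} (hg : g ∈ L) (hg' : g' ∈ L)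
    (hne : g ≠ g') (hxg : incid x g) (hxg' : incid x g') : crossing L x := by
  have hsub : {g, g'} ⊆ {l ∈ L | incid x l} := by
    rintro y (rfl | rfl) <;> exact ⟨‹_›, ‹_›⟩
  simpa [crossing, mult, Set.ncard_pair hne] using Set.ncard_le_ncard hsub (hfin.sep _)

lemma setOf_crossing_finite (hfin : L.Finite) : {q | crossing L q}.Finite := by
  classical
  refine ((hfin.prod hfin).image fun g => cross g.1 g.2).subset fun q hq => ?_
  obtain ⟨g, g', ⟨hg, hqg⟩, ⟨hg', hqg'⟩, hne⟩ := (Set.one_lt_ncard_iff (hfin.sep _)).1 hq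
  rw [incid_iff_orthogonal] at hqg hqg'
  exact ⟨(g, g'), ⟨hg, hg'⟩, (eq_cross_of_orthogonal hne hqg hqg').symm⟩

lemma exists_mem_incid_ne_ne {q : PP K} (hq : 2 < mult L q) (a b : PP K) :
    ∃ E ∈ L, incid q E ∧ E ≠ a ∧ E ≠ b := by
  by_contra! h
  have hsub : {E ∈ L | incid q E} ⊆ {a, b} := fun E ⟨hE, hqE⟩ => by
    by_cases hEa : E = a
    · exact Or.inl hEa
    · exact Or.inr (h E hE hqE hEa)
  have := (Set.ncard_le_ncard hsub (Set.toFinite _)).trans (Set.ncard_insert_le a {b})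
  rw [Set.ncard_singleton] at this
  exact (hq.trans_le this).false

lemma exists_mem_incid_ne_not_incid {p q : PP K} (hp : modular L p) (hq : 2 < mult L q)
    (hqp : q ≠ p) (l : PP K) : ∃ E ∈ L, incid q E ∧ E ≠ l ∧ ¬ incid p E := by
  obtain ⟨g, -, hpg, hqg⟩ := hp.2 q (by unfold crossing; omega) hqp
  obtain ⟨E, hE, hqE, hEl, hEg⟩ := exists_mem_incid_ne_ne hq l g
  exact ⟨E, hE, hqE, hEl, fun hpE => hEg (line_eq_of_incid hqp.symm hpE hqE hpg hqg)⟩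

def crossingsOn (L : Set (PP K)) (l : PP K) : Set (PP K) :=
  {q | crossing L q ∧ incid q l}

lemma exists_ne_mem_crossingsOn (hfin : L.Finite) {p l g₁ g₂ : PP K} (hl : l ∈ L)
    (hpl : ¬ incid p l) (hg₁ : g₁ ∈ L) (hg₂ : g₂ ∈ L) (hpg₁ : incid p g₁) (hpg₂ : incid p g₂)
    (hg₁₂ : g₁ ≠ g₂) : ∃ q₁ ∈ crossingsOn L l, ∃ q₂ ∈ crossingsOn L l, q₁ ≠ q₂ := by
  have hg₁l : g₁ ≠ l := fun h => hpl (h ▸ hpg₁)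
  have hg₂l : g₂ ≠ l := fun h => hpl (h ▸ hpg₂)
  obtain ⟨q₁, hq₁g, hq₁l⟩ := exists_incid_incid hg₁l
  obtain ⟨q₂, hq₂g, hq₂l⟩ := exists_incid_incid hg₂l
  refine ⟨q₁, ⟨crossing_of_incid hfin hg₁ hl hg₁l hq₁g hq₁l, hq₁l⟩,
    q₂, ⟨crossing_of_incid hfin hg₂ hl hg₂l hq₂g hq₂l, hq₂l⟩, fun h => hg₁₂ ?_⟩
  exact line_eq_of_incid (fun h : p = q₁ => hpl (h ▸ hq₁l)) hpg₁ hq₁g hpg₂ (h ▸ hq₂g)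

end Arrangement

lemma exists_incid_forall_not_incid {K : Type*} [Field K] [Infinite K] {p g₁ g₂ : PP K}
    (h₁₂ : g₁ ≠ g₂) (h₁ : incid p g₁) (h₂ : incid p g₂) {T : Set (PP K)} (hT : T.Finite)
    (hpT : p ∉ T) : ∃ π, incid p π ∧ ∀ q ∈ T, ¬ incid q π := by
  have hdot (x : PP K) (t : K) : x.rep ⬝ᵥ (g₁.rep + t • g₂.rep) =
      x.rep ⬝ᵥ g₁.rep + t * x.rep ⬝ᵥ g₂.rep := by
    rw [dotProduct_add, dotProduct_smul, smul_eq_mul]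
  -- each `q ∈ T` lies on at most one line `g₁ + t g₂` of the pencil through `p`
  have hbad : ∀ q ∈ T, {t : K | q.rep ⬝ᵥ (g₁.rep + t • g₂.rep) = 0}.Subsingleton := by
    intro q hq t ht t' ht'
    simp only [Set.mem_ofPred_eq, hdot] at ht ht'
    by_contra hne
    have hq₂ : incid q g₂ := by
      have : (t - t') * q.rep ⬝ᵥ g₂.rep = 0 := by linear_combination ht - ht'
      exact (mul_eq_zero.1 this).resolve_left (sub_ne_zero.2 hne)
    have hq₁ : incid q g₁ := by
      unfold incid at hq₂ ⊢
      rwa [hq₂, mul_zero, add_zero] at ht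
    exact hpT (point_eq_of_incid h₁₂ h₁ h₂ hq₁ hq₂ ▸ hq)
  obtain ⟨t, ht⟩ := ((hT.biUnion fun q hq => (hbad q hq).finite).infinite_compl).nonempty
  have hne : g₁.rep + t • g₂.rep ≠ 0 := fun h => h₁₂ <| by
    rw [← g₁.mk_rep, ← g₂.mk_rep, mk_eq_mk_iff']
    exact ⟨-t, by rw [neg_smul, neg_eq_iff_add_eq_zero, add_comm, h]⟩
  refine ⟨mk K _ hne, ?_, fun q hq hqπ => ht (Set.mem_biUnion hq ((incid_mk hne).1 hqπ))⟩
  rw [incid_mk, hdot, h₁, h₂, mul_zero, add_zero]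

section Chart

variable {K : Type*} [Field K]

/-- In the affine chart with line at infinity `π`, the affine function vanishing on `g` (junk on
`π` itself, where the denominator is `0`). -/
noncomputable def affineCoord (π g x : PP K) : K :=
  x.rep ⬝ᵥ g.rep / x.rep ⬝ᵥ π.rep

/-- Affine coordinates with line at infinity `π`, abscissa `affineCoord π μ` and ordinate
`affineCoord π l`: the lines through `p` are the vertical lines, `l` is the horizontal axis. -/
structure IsChart (p l π μ : PP K) : Prop where
  not_incid_line : ¬ incid p l
  incid_infinity : incid p π
  incid_vertical : incid p μ
  ne : π ≠ μ

lemma affineCoord_eq_zero_iff {π g x : PP K} (hx : ¬ incid x π) :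
    affineCoord π g x = 0 ↔ incid x g := by
  rw [affineCoord, div_eq_zero_iff]
  exact or_iff_left hx

lemma mul_affineCoord_add_add_mul_affineCoord_eq_zero {l π μ h x : PP K} {r s t : K}
    (hh : h.rep = r • l.rep + s • π.rep + t • μ.rep) (hx : ¬ incid x π) (hxh : incid x h) :
    r * affineCoord π l x + s + t * affineCoord π μ x = 0 := by
  unfold incid at hx hxh
  rw [hh] at hxh
  simp only [dotProduct_add, dotProduct_smul, smul_eq_mul] at hxh
  unfold affineCoord
  field_simp
  linear_combination hxh

namespace IsChart

variable {p l π μ : PP K}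

lemma exists_eq_smul_add_smul_add_smul (hc : IsChart p l π μ) (w : Fin 3 → K) :
    ∃ r s t : K, w = r • l.rep + s • π.rep + t • μ.rep := by
  have hπμ : π.rep ⨯₃ μ.rep ≠ 0 := fun h => hc.ne <| by
    simpa using (mk_eq_mk_iff_crossProduct_eq_zero π.rep_nonzero μ.rep_nonzero).2 h
  obtain ⟨a, ha⟩ := (mk_eq_mk_iff' K _ _ p.rep_nonzero hπμ).1 <| by
    rw [mk_eq_mk_iff_crossProduct_eq_zero, cross_cross_eq_smul_sub_smul', dotProduct_comm π.rep,
      hc.incid_vertical, hc.incid_infinity, zero_smul, zero_smul, sub_zero]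
  -- `l` is a third direction: `det (l, π, μ) = l · (π × μ)` is a multiple of `l · p ≠ 0`
  have hdet : det ![l.rep, π.rep, μ.rep] ≠ 0 := by
    rw [← triple_product_eq_det]
    intro h
    apply hc.not_incid_line
    rw [incid, ← ha, smul_dotProduct, dotProduct_comm, h, smul_zero]
  obtain ⟨c, rfl⟩ := vecMul_surjective_iff_isUnit.2 ((isUnit_iff_isUnit_det _).2 hdet.isUnit) w
  refine ⟨c 0, c 1, c 2, ?_⟩
  ext i
  simp [vecMul, dotProduct, Fin.sum_univ_three]

lemma eq_of_affineCoord_eq (hc : IsChart p l π μ) {x y : PP K} (hxl : incid x l)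
    (hyl : incid y l) (hxπ : ¬ incid x π) (hyπ : ¬ incid y π)
    (hxy : affineCoord π μ x = affineCoord π μ y) : x = y := by
  unfold incid at hxl hyl hxπ hyπ
  unfold affineCoord at hxy
  rw [div_eq_div_iff hxπ hyπ] at hxy
  set z := (y.rep ⬝ᵥ π.rep) • x.rep - (x.rep ⬝ᵥ π.rep) • y.rep
  have hz : ∀ w, z ⬝ᵥ w = 0 := fun w => by
    obtain ⟨r, s, t, rfl⟩ := hc.exists_eq_smul_add_smul_add_smul w
    simp only [z, dotProduct_add, dotProduct_smul, sub_dotProduct, smul_dotProduct, smul_eq_mul,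
      hxl, hyl]
    linear_combination t * hxy
  rw [← x.mk_rep, ← y.mk_rep, mk_eq_mk_iff']
  refine ⟨(x.rep ⬝ᵥ π.rep) / (y.rep ⬝ᵥ π.rep), ?_⟩
  rw [div_eq_inv_mul, mul_smul, ← sub_eq_zero.1 (dotProduct_eq_zero_iff.1 hz), smul_smul,
    inv_mul_cancel₀ hyπ, one_smul]

lemma incid_iff_eq_zero (hc : IsChart p l π μ) {h : PP K} {r s t : K}
    (hh : h.rep = r • l.rep + s • π.rep + t • μ.rep) : incid p h ↔ r = 0 := by
  have hpπ : p.rep ⬝ᵥ π.rep = 0 := hc.incid_infinity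
  have hpμ : p.rep ⬝ᵥ μ.rep = 0 := hc.incid_vertical
  rw [incid, hh]
  simp only [dotProduct_add, dotProduct_smul, smul_eq_mul, hpπ, hpμ, mul_zero, add_zero]
  exact mul_eq_zero.trans (or_iff_left hc.not_incid_line)

lemma affineCoord_eq_of_incid (hc : IsChart p l π μ) {g x y : PP K} (hpg : incid p g)
    (hxπ : ¬ incid x π) (hyπ : ¬ incid y π) (hxg : incid x g) (hyg : incid y g) :
    affineCoord π μ x = affineCoord π μ y := by
  obtain ⟨r, s, t, hg⟩ := hc.exists_eq_smul_add_smul_add_smul g.rep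
  obtain rfl := (hc.incid_iff_eq_zero hg).1 hpg
  have hx := mul_affineCoord_add_add_mul_affineCoord_eq_zero hg hxπ hxg
  have hy := mul_affineCoord_add_add_mul_affineCoord_eq_zero hg hyπ hyg
  have ht : t ≠ 0 := by
    rintro rfl
    apply g.rep_nonzero
    rw [hg, show s = 0 by linear_combination hx]
    simp
  exact mul_left_cancel₀ ht (by linear_combination hx - hy)

lemma exists_affineCoord_eq_mul_sub (hc : IsChart p l π μ) {h q : PP K} (hph : ¬ incid p h)
    (hqh : incid q h) (hql : incid q l) (hqπ : ¬ incid q π) :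
    ∃ u, ∀ x, ¬ incid x π → incid x h →
      affineCoord π l x = u * (affineCoord π μ x - affineCoord π μ q) := by
  obtain ⟨r, s, t, hh⟩ := hc.exists_eq_smul_add_smul_add_smul h.rep
  have hr : r ≠ 0 := mt (hc.incid_iff_eq_zero hh).2 hph
  have hq := mul_affineCoord_add_add_mul_affineCoord_eq_zero hh hqπ hqh
  rw [(affineCoord_eq_zero_iff hqπ).2 hql] at hq
  refine ⟨-t / r, fun x hxπ hxh => ?_⟩
  have hx := mul_affineCoord_add_add_mul_affineCoord_eq_zero hh hxπ hxh
  field_simp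
  linear_combination hx - hq

end IsChart

end Chart

section Sign

variable {K ι : Type*} [Field K] [LinearOrder K] [IsStrictOrderedRing K]

lemma mul_pos_of_forall_exists_mul_pos {S : Set ι} (hS : S.Finite) {a u : ι → K}
    (h : ∀ i ∈ S, ∀ j ∈ S, a i ≠ a j → ∃ k ∈ S, 0 < u i * u j * ((a k - a i) * (a k - a j)))
    {i j : ι} (hi : i ∈ S) (hj : j ∈ S) (hij : a i < a j) : 0 < u i * u j := by
  by_contra! hneg
  obtain ⟨⟨i, j⟩, ⟨⟨hi, hj⟩, hij, hu⟩, hmin⟩ := Set.exists_min_image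
    {x : ι × ι | x ∈ S ×ˢ S ∧ a x.1 < a x.2 ∧ u x.1 * u x.2 ≤ 0} (fun x => a x.2 - a x.1)
    ((hS.prod hS).subset fun x hx => hx.1) ⟨(i, j), ⟨hi, hj⟩, hij, hneg⟩
  obtain ⟨k, hk, hpos⟩ := h i hi j hj hij.ne
  have hk_between : (a k - a i) * (a k - a j) < 0 := by
    by_contra! h'
    exact hpos.not_ge (mul_nonpos_of_nonpos_of_nonneg hu h')
  obtain ⟨hik, hkj⟩ : a i < a k ∧ a k < a j := by
    rcases mul_neg_iff.1 hk_between with ⟨h1, h2⟩ | ⟨h1, h2⟩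
    · exact ⟨by linarith, by linarith⟩
    · linarith
  have hsplit : u i * u k ≤ 0 ∨ u k * u j ≤ 0 := by
    by_contra! h'
    nlinarith [mul_pos h'.1 h'.2, mul_nonpos_of_nonpos_of_nonneg hu (sq_nonneg (u k))]
  rcases hsplit with hu' | hu'
  · have := hmin (i, k) ⟨⟨hi, hk⟩, hik, hu'⟩
    dsimp only at this
    linarith
  · have := hmin (k, j) ⟨⟨hk, hj⟩, hkj, hu'⟩
    dsimp only at this
    linarith

lemma eq_of_forall_exists_mul_pos {S : Set ι} (hS : S.Finite) {a u : ι → K}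
    (h : ∀ i ∈ S, ∀ j ∈ S, a i ≠ a j → ∃ k ∈ S, 0 < u i * u j * ((a k - a i) * (a k - a j))) :
    ∀ i ∈ S, ∀ j ∈ S, a i = a j := by
  by_contra! ⟨i, hi, j, hj, hij⟩
  obtain ⟨i₀, hi₀, hmin⟩ := Set.exists_min_image S a hS ⟨i, hi⟩
  obtain ⟨j₀, hj₀, hmax⟩ := Set.exists_max_image S a hS ⟨i, hi⟩
  have hlt : a i₀ < a j₀ := by
    rcases hij.lt_or_gt with h' | h' <;> linarith [hmin i hi, hmin j hj, hmax i hi, hmax j hj]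
  obtain ⟨k, hk, hpos⟩ := h i₀ hi₀ j₀ hj₀ hlt.ne
  have hk_between : (a k - a i₀) * (a k - a j₀) ≤ 0 :=
    mul_nonpos_of_nonneg_of_nonpos (by linarith [hmin k hk]) (by linarith [hmax k hk])
  exact hpos.not_ge (mul_nonpos_of_nonneg_of_nonpos
    (mul_pos_of_forall_exists_mul_pos hS h hi₀ hj₀ hlt).le hk_between)

end Sign

lemma exists_mem_crossingsOn_mul_pos {K : Type*} [Field K] [LinearOrder K]
    [IsStrictOrderedRing K] {L : Set (PP K)} (hfin : L.Finite) {p l π μ : PP K}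
    (hp : modular L p) (hl : l ∈ L) (hc : IsChart p l π μ)
    (hπ : ∀ q, crossing L q → q ≠ p → ¬ incid q π) {E : PP K → PP K} {u : PP K → K}
    (hE : ∀ q ∈ crossingsOn L l, E q ∈ L ∧ incid q (E q) ∧ E q ≠ l ∧ ¬ incid p (E q))
    (hu : ∀ q ∈ crossingsOn L l, ∀ x, ¬ incid x π → incid x (E q) →
      affineCoord π l x = u q * (affineCoord π μ x - affineCoord π μ q))
    {q q' : PP K} (hq : q ∈ crossingsOn L l) (hq' : q' ∈ crossingsOn L l)
    (hne : affineCoord π μ q ≠ affineCoord π μ q') :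
    ∃ t ∈ crossingsOn L l, 0 < u q * u q' *
      ((affineCoord π μ t - affineCoord π μ q) * (affineCoord π μ t - affineCoord π μ q')) := by
  obtain ⟨hEL, hqE, hEl, hpE⟩ := hE q hq
  obtain ⟨hE'L, hq'E', hE'l, -⟩ := hE q' hq'
  have hqq' : q ≠ q' := fun h => hne (h ▸ rfl)
  have hEE' : E q ≠ E q' := fun h => hEl (line_eq_of_incid hqq' hqE (h ▸ hq'E') hq.2 hq'.2)
  -- `E q`, `E q'` meet in a crossing point `x`, projected from `p` to a crossing point `t` of `l`
  obtain ⟨x, hxE, hxE'⟩ := exists_incid_incid hEE'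
  have hxc : crossing L x := crossing_of_incid hfin hEL hE'L hEE' hxE hxE'
  have hxp : x ≠ p := fun h => hpE (h ▸ hxE)
  have hxπ : ¬ incid x π := hπ x hxc hxp
  obtain ⟨g, hg, hpg, hxg⟩ := hp.2 x hxc hxp
  have hgl : g ≠ l := fun h => hc.not_incid_line (h ▸ hpg)
  obtain ⟨t, htg, htl⟩ := exists_incid_incid hgl
  have htc : crossing L t := crossing_of_incid hfin hg hl hgl htg htl
  have htp : t ≠ p := fun h => hc.not_incid_line (h ▸ htl)
  refine ⟨t, ⟨htc, htl⟩, ?_⟩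
  rw [hc.affineCoord_eq_of_incid hpg (hπ t htc htp) hxπ htg hxg]
  have hxl : affineCoord π l x ≠ 0 := fun h => hqq' <|
    have hxl := (affineCoord_eq_zero_iff hxπ).1 h
    (point_eq_of_incid hEl hqE hq.2 hxE hxl).trans (point_eq_of_incid hE'l hxE' hxl hq'E' hq'.2)
  calc 0 < affineCoord π l x * affineCoord π l x := mul_self_pos.2 hxl
    _ = u q * (affineCoord π μ x - affineCoord π μ q) *
          (u q' * (affineCoord π μ x - affineCoord π μ q')) :=
      congr_arg₂ (· * ·) (hu q hq x hxπ hxE) (hu q' hq' x hxπ hxE')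
    _ = _ := by ring

theorem line_avoiding_modular_point_has_double_point_general (L : Set (PP ℝ))
    (hfin : L.Finite) (p : PP ℝ) (hp : modular L p) :
    ∀ l ∈ L, ¬ incid p l → ∃ q : PP ℝ, incid q l ∧ mult L q = 2 := by
  intro l hl hpl
  by_contra! hcon
  obtain ⟨g₁, g₂, ⟨hg₁, hpg₁⟩, ⟨hg₂, hpg₂⟩, hg₁₂⟩ := (Set.one_lt_ncard_iff (hfin.sep _)).1 hp.1
  obtain ⟨π, hpπ, hπ⟩ := exists_incid_forall_not_incid hg₁₂ hpg₁ hpg₂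
    ((setOf_crossing_finite hfin).sdiff (t := {p})) fun h => h.2 rfl
  replace hπ : ∀ q, crossing L q → q ≠ p → ¬ incid q π := fun q hq hqp => hπ q ⟨hq, hqp⟩
  obtain ⟨μ, hpμ, hπμ⟩ : ∃ μ, incid p μ ∧ π ≠ μ := by
    by_cases h : π = g₁
    exacts [⟨g₂, hpg₂, h ▸ hg₁₂⟩, ⟨g₁, hpg₁, h⟩]
  have hc : IsChart p l π μ := ⟨hpl, hpπ, hpμ, hπμ⟩
  have hQp : ∀ q ∈ crossingsOn L l, q ≠ p := fun q hq h => hpl (h ▸ hq.2)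
  choose! E hE using fun q (hq : q ∈ crossingsOn L l) => exists_mem_incid_ne_not_incid hp
    (hq.1.lt_of_ne (hcon q hq.2).symm) (hQp q hq) l
  choose! u hu using fun q (hq : q ∈ crossingsOn L l) => hc.exists_affineCoord_eq_mul_sub
    (hE q hq).2.2.2 (hE q hq).2.1 hq.2 (hπ q hq.1 (hQp q hq))
  have hX := eq_of_forall_exists_mul_pos ((setOf_crossing_finite hfin).subset fun q hq => hq.1)
    fun q hq q' hq' => exists_mem_crossingsOn_mul_pos hfin hp hl hc hπ hE hu hq hq'
  obtain ⟨q₁, hq₁, q₂, hq₂, hq₁₂⟩ :=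
    exists_ne_mem_crossingsOn hfin hl hpl hg₁ hg₂ hpg₁ hpg₂ hg₁₂
  exact hq₁₂ (hc.eq_of_affineCoord_eq hq₁.2 hq₂.2 (hπ q₁ hq₁.1 (hQp q₁ hq₁))
    (hπ q₂ hq₂.1 (hQp q₂ hq₂)) (hX q₁ hq₁ q₂ hq₂))

/-- in a non-pencil real supersolvable arrangement with modular
point p of multiplicity m, every line not through p contains a crossing point
of multiplicity 2. -/
theorem line_avoiding_modular_point_has_double_point (L : Set (PP ℝ))
    (hfin : L.Finite) (hnp : ¬ isPencil L) (p : PP ℝ) (m : ℕ)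
    (hp : modular L p) (hpm : mult L p = m) :
    ∀ l ∈ L, ¬ incid p l → ∃ q : PP ℝ, incid q l ∧ mult L q = 2 :=
  line_avoiding_modular_point_has_double_point_general L hfin p hp
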